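/- arXiv:1704.06622 — 7 statements merged into one kernel-verified Lean document; each statement's English description precedes it below -/
import Mathlib

section
/- Let G be a ρ-vertex-connected graph, let e = (x,y) and e' = (u,v) be distinct edges neither of which is ρ-critical in G, and suppose X = S ∪ {e'} is a mixed x'-y' cut of size ρ in G−e for some vertices x', y' (so |S| = ρ−1, S a vertex set). Let A be the set of vertices in the connected component of x' in (G−e)−X and let B = V(G) \ (A ∪ S). Then e' has one endpoint in A and one endpoint in B, and e also has one endpoint in A and one endpoint in B. -/
open SimpleGraph

/-- A graph is `ρ`-vertex-connected if it has more than `ρ` vertices and deleting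
any fewer than `ρ` vertices leaves it connected. -/
def KConnected {V : Type*} [Fintype V] (G : SimpleGraph V) (ρ : ℕ) : Prop :=
  ρ < Fintype.card V ∧
    ∀ S : Finset V, S.card < ρ → (G.induce ((↑S : Set V)ᶜ)).Connected

/-!
Let `A` be the set of vertices reachable from `x'` in `G - e` avoiding `S` and `e'`. Then every
edge of `G - e` leaving `A` towards a vertex outside `S` is `e'`. Since `e` and `e'` are not
critical, both `G - e` and `G - e'` stay connected after deleting the `ρ - 1` vertices of `S`, so
each contains a path from `x' ∈ A` to `y' ∉ A` avoiding `S`, hence an edge from `A` to `B`. In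
`G - e` this edge can only be `e'`; in `G - e'` it is either `e` or an edge of `G - e` other than
`e'`, and the latter is impossible.
-/

section

variable {V : Type*}

theorem KConnected.preconnected_induce_compl [Fintype V] {G : SimpleGraph V} {ρ : ℕ}
    (hG : KConnected G ρ) {S : Finset V} (hS : S.card < ρ) :
    (G.induce ((↑S : Set V)ᶜ)).Preconnected :=
  (hG.2 S hS).preconnected

theorem SimpleGraph.exists_adj_boundary_of_preconnected_induce {G : SimpleGraph V} {S : Set V}
    (hG : (G.induce Sᶜ).Preconnected) {A : Set V} {c d : V} (hc : c ∈ A) (hcS : c ∉ S)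
    (hd : d ∉ A) (hdS : d ∉ S) :
    ∃ a b, G.Adj a b ∧ a ∈ A ∧ b ∉ A ∧ b ∉ S := by
  obtain ⟨p⟩ := hG ⟨c, hcS⟩ ⟨d, hdS⟩
  obtain ⟨dart, -, ha, hb⟩ := p.exists_boundary_dart {z | z.val ∈ A} hc hd
  exact ⟨_, _, dart.adj, ha, hb, dart.snd.2⟩

theorem SimpleGraph.exists_walk_avoiding_of_adj {G : SimpleGraph V} {S : Set V} {f : Sym2 V}
    {x a b : V} (ha : ∃ p : G.Walk x a, (∀ q ∈ p.support, q ∉ S) ∧ f ∉ p.edges)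
    (hab : G.Adj a b) (hbS : b ∉ S) (hf : s(a, b) ≠ f) :
    ∃ p : G.Walk x b, (∀ q ∈ p.support, q ∉ S) ∧ f ∉ p.edges := by
  obtain ⟨p, hpS, hpf⟩ := ha
  refine ⟨p.concat hab, ?_, ?_⟩
  · simp only [Walk.support_concat, List.mem_append, List.mem_singleton]
    rintro q (hq | rfl)
    exacts [hpS q hq, hbS]
  · simp only [Walk.edges_concat, List.concat_eq_append, List.mem_append, List.mem_singleton]
    rintro (h | h)
    exacts [hpf h, hf h.symm]

theorem Sym2.crosses_of_eq {a b u v : V} {A B : Set V} (h : s(a, b) = s(u, v)) (ha : a ∈ A)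
    (hb : b ∈ B) : (u ∈ A ∧ v ∈ B) ∨ (v ∈ A ∧ u ∈ B) := by
  rcases Sym2.eq_iff.1 h with ⟨rfl, rfl⟩ | ⟨rfl, rfl⟩
  exacts [Or.inl ⟨ha, hb⟩, Or.inr ⟨ha, hb⟩]

end

theorem stmt1_general {V : Type*} [Fintype V] [DecidableEq V] (G : SimpleGraph V) (ρ : ℕ)
    (hρ : 1 ≤ ρ) (x y u v : V)
    (hGe : KConnected (G.deleteEdges {s(x, y)}) ρ)
    (hGe' : KConnected (G.deleteEdges {s(u, v)}) ρ)
    (x' y' : V) (S : Finset V) (hScard : S.card = ρ - 1)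
    (hx'S : x' ∉ S) (hy'S : y' ∉ S)
    -- X = S ∪ {e'} is a mixed x'-y' cut in G - e : every x'-y' walk in G - e
    -- meets S or uses the edge e' = s(u,v)
    (hcut : ∀ p : (G.deleteEdges {s(x, y)}).Walk x' y',
      (∃ z ∈ p.support, z ∈ S) ∨ s(u, v) ∈ p.edges)
    -- A is the vertex set of the connected component of x' in (G - e) - X
    (A B : Set V)
    (hA : A = {z : V | ∃ p : (G.deleteEdges {s(x, y)}).Walk x' z,
      (∀ q ∈ p.support, q ∉ S) ∧ s(u, v) ∉ p.edges})
    (hB : B = {z : V | z ∉ A ∧ z ∉ (↑S : Set V)}) :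
    ((u ∈ A ∧ v ∈ B) ∨ (v ∈ A ∧ u ∈ B)) ∧
      ((x ∈ A ∧ y ∈ B) ∨ (y ∈ A ∧ x ∈ B)) := by
  subst hB
  have hS : S.card < ρ := by omega
  have hx'A : x' ∈ A := hA ▸ ⟨Walk.nil, by simpa using hx'S, by simp⟩
  have hy'A : y' ∉ A := by
    rw [hA]
    rintro ⟨p, hpS, hpe⟩
    exact (hcut p).elim (fun ⟨z, hz, hzS⟩ => hpS z hz hzS) hpe
  have hA_closed : ∀ a b, a ∈ A → (G.deleteEdges {s(x, y)}).Adj a b → b ∉ S →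
      s(a, b) ≠ s(u, v) → b ∈ A := by
    rw [hA]
    exact fun a b => exists_walk_avoiding_of_adj
  constructor
  · obtain ⟨a, b, hab, ha, hb, hbS⟩ := exists_adj_boundary_of_preconnected_induce
      (hGe.preconnected_induce_compl hS) hx'A hx'S hy'A hy'S
    have he' : s(a, b) = s(u, v) := by
      by_contra h
      exact hb (hA_closed a b ha hab hbS h)
    exact Sym2.crosses_of_eq he' ha ⟨hb, hbS⟩
  · obtain ⟨a, b, hab, ha, hb, hbS⟩ := exists_adj_boundary_of_preconnected_induce
      (hGe'.preconnected_induce_compl hS) hx'A hx'S hy'A hy'S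
    have he : s(a, b) = s(x, y) := by
      by_contra h
      rw [deleteEdges_adj, Set.mem_singleton_iff] at hab
      exact hb (hA_closed a b ha (by simp [hab.1, h]) hbS hab.2)
    exact Sym2.crosses_of_eq he ha ⟨hb, hbS⟩

theorem stmt1 {V : Type*} [Fintype V] [DecidableEq V] (G : SimpleGraph V) (ρ : ℕ)
    (hρ : 1 ≤ ρ) (x y u v : V) (hxy : G.Adj x y) (huv : G.Adj u v)
    (hne : s(x, y) ≠ s(u, v))
    (hG : KConnected G ρ)
    (hGe : KConnected (G.deleteEdges {s(x, y)}) ρ)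
    (hGe' : KConnected (G.deleteEdges {s(u, v)}) ρ)
    (x' y' : V) (hx'y' : x' ≠ y') (S : Finset V) (hScard : S.card = ρ - 1)
    (hx'S : x' ∉ S) (hy'S : y' ∉ S)
    -- X = S ∪ {e'} is a mixed x'-y' cut in G - e : every x'-y' walk in G - e
    -- meets S or uses the edge e' = s(u,v)
    (hcut : ∀ p : (G.deleteEdges {s(x, y)}).Walk x' y',
      (∃ z ∈ p.support, z ∈ S) ∨ s(u, v) ∈ p.edges)
    -- A is the vertex set of the connected component of x' in (G - e) - X
    (A B : Set V)
    (hA : A = {z : V | ∃ p : (G.deleteEdges {s(x, y)}).Walk x' z,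
      (∀ q ∈ p.support, q ∉ S) ∧ s(u, v) ∉ p.edges})
    (hB : B = {z : V | z ∉ A ∧ z ∉ (↑S : Set V)}) :
    ((u ∈ A ∧ v ∈ B) ∨ (v ∈ A ∧ u ∈ B)) ∧
      ((x ∈ A ∧ y ∈ B) ∨ (y ∈ A ∧ x ∈ B)) :=
  stmt1_general G ρ hρ x y u v hGe hGe' x' y' S hScard hx'S hy'S hcut A B hA hB
end

section
/- Let G be a ρ-vertex-connected graph and let e = (x,y) and e' be distinct edges neither of which is ρ-critical in G. If e' is ρ-critical in G−e, then e' participates in every x-y flow of value ρ in G−e; that is, for every collection of ρ pairwise internally vertex-disjoint x-y paths in G−e, at least one of the paths uses the edge e'. -/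
open SimpleGraph

/-- Two walks with the same endpoints are internally vertex-disjoint if every
common vertex is one of the endpoints. -/
def IntDisjoint {V : Type*} {G : SimpleGraph V} {x y : V} (p q : G.Walk x y) : Prop :=
  ∀ v, v ∈ p.support → v ∈ q.support → v = x ∨ v = y

/-!
Since `G - e'` is `ρ`-connected but `G - e - e'` is not, some set `S` of fewer than `ρ` vertices
disconnects `G - e - e'` while `G - e' - S` stays connected. Hence `e = xy` is a bridge of
`G - e' - S`: both `x` and `y` survive in it, and every `x`-`y` walk of `G - e - e'` meets `S`.
An `x`-`y` flow of value `ρ` in `G - e` avoiding `e'` would thus put `ρ` distinct internal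
vertices into `S`.
-/

namespace SimpleGraph

variable {V : Type*} {H : SimpleGraph V} {s : Set V} {x y : V}

theorem induce_deleteEdges (t : Set (Sym2 V)) :
    (H.deleteEdges t).induce s = (H.induce s).deleteEdges (Sym2.map (↑) ⁻¹' t) := by
  ext a b
  simp

theorem Connected.mem_of_not_connected_induce_deleteEdges (hconn : (H.induce s).Connected)
    (hdisc : ¬((H.deleteEdges {s(x, y)}).induce s).Connected) : x ∈ s := by
  by_contra hx
  have hinduce : (H.deleteEdges {s(x, y)}).induce s = H.induce s := by
    ext ⟨a, ha⟩ ⟨b, hb⟩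
    simp only [comap_adj, Function.Embedding.coe_subtype, deleteEdges_adj, Set.mem_singleton_iff,
      Sym2.eq_iff, and_iff_left_iff_imp]
    rintro - (⟨rfl, -⟩ | ⟨-, rfl⟩) <;> contradiction
  exact hdisc (hinduce ▸ hconn)

theorem Connected.exists_mem_support_notMem_of_not_connected_induce_deleteEdges
    (hconn : (H.induce s).Connected)
    (hdisc : ¬((H.deleteEdges {s(x, y)}).induce s).Connected)
    (p : (H.deleteEdges {s(x, y)}).Walk x y) : ∃ w ∈ p.support, w ∉ s := by
  by_contra! hp
  have hx := hp x p.start_mem_support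
  have hy := hp y p.end_mem_support
  have hpre : Sym2.map ((↑) : s → V) ⁻¹' {s(x, y)} = {s(⟨x, hx⟩, ⟨y, hy⟩)} := by
    ext e
    induction e using Sym2.ind
    simp [Subtype.ext_iff]
  have hbridge : (H.induce s).IsBridge s(⟨x, hx⟩, ⟨y, hy⟩) := by
    by_contra hnot
    exact hdisc (by
      simpa only [induce_deleteEdges, hpre] using hconn.connected_delete_edge_of_not_isBridge hnot)
  rw [isBridge_iff, ← hpre, ← induce_deleteEdges] at hbridge
  exact hbridge ⟨p.induce s hp⟩

end SimpleGraph

theorem card_le_card_of_pairwise_intDisjoint {V ι : Type*} [Fintype ι] {G : SimpleGraph V}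
    {x y : V} {P : ι → G.Walk x y} (hP : Pairwise fun i j ↦ IntDisjoint (P i) (P j))
    {S : Finset V} (hx : x ∉ S) (hy : y ∉ S) (hmeet : ∀ i, ∃ w ∈ (P i).support, w ∈ S) :
    Fintype.card ι ≤ S.card := by
  choose w hwP hwS using hmeet
  have hinj : Function.Injective fun i ↦ (⟨w i, hwS i⟩ : S) := by
    intro i j hij
    by_contra hne
    have hwij : w i = w j := congrArg Subtype.val hij
    rcases hP hne (w i) (hwP i) (hwij ▸ hwP j) with h | h
    · exact hx (h ▸ hwS i)
    · exact hy (h ▸ hwS i)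
  simpa using Fintype.card_le_of_injective _ hinj

theorem stmt2_general {V : Type*} [Fintype V] (G : SimpleGraph V) (ρ : ℕ)
    (x y u v : V)
    (hGe' : KConnected (G.deleteEdges {s(u, v)}) ρ)
    (hcrit : ¬ KConnected ((G.deleteEdges {s(x, y)}).deleteEdges {s(u, v)}) ρ) :
    ∀ P : Fin ρ → (G.deleteEdges {s(x, y)}).Walk x y,
      (∀ i, (P i).IsPath) → (∀ i j, i ≠ j → IntDisjoint (P i) (P j)) →
      ∃ i, s(u, v) ∈ (P i).edges := by
  intro P _ hdisj
  by_contra! havoid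
  obtain ⟨S, hS, hdisc⟩ : ∃ S : Finset V, S.card < ρ ∧
      ¬(((G.deleteEdges {s(u, v)}).deleteEdges {s(x, y)}).induce (↑S)ᶜ).Connected := by
    simpa [KConnected, hGe'.1, deleteEdges_deleteEdges, Set.union_comm] using hcrit
  have hconn := hGe'.2 S hS
  have hx : x ∉ S := by simpa using hconn.mem_of_not_connected_induce_deleteEdges hdisc
  have hy : y ∉ S := by
    rw [Sym2.eq_swap (a := x)] at hdisc
    simpa using hconn.mem_of_not_connected_induce_deleteEdges hdisc
  have hmeet : ∀ i, ∃ w ∈ (P i).support, w ∈ S := fun i ↦ by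
    have hedges : ∀ e ∈ (P i).edges,
        e ∈ ((G.deleteEdges {s(u, v)}).deleteEdges {s(x, y)}).edgeSet := by
      intro e he
      have := (P i).edges_subset_edgeSet he
      simp only [edgeSet_deleteEdges] at this ⊢
      grind
    simpa using hconn.exists_mem_support_notMem_of_not_connected_induce_deleteEdges hdisc
      ((P i).transfer _ hedges)
  exact hS.not_ge <| by
    simpa using card_le_card_of_pairwise_intDisjoint (fun i j ↦ hdisj i j) hx hy hmeet

theorem stmt2 {V : Type*} [Fintype V] (G : SimpleGraph V) (ρ : ℕ)
    (hρ : 1 ≤ ρ) (x y u v : V) (hxy : G.Adj x y) (huv : G.Adj u v)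
    (hne : s(x, y) ≠ s(u, v))
    (hG : KConnected G ρ)
    (hGe : KConnected (G.deleteEdges {s(x, y)}) ρ)
    (hGe' : KConnected (G.deleteEdges {s(u, v)}) ρ)
    (hcrit : ¬ KConnected ((G.deleteEdges {s(x, y)}).deleteEdges {s(u, v)}) ρ) :
    ∀ P : Fin ρ → (G.deleteEdges {s(x, y)}).Walk x y,
      (∀ i, (P i).IsPath) → (∀ i j, i ≠ j → IntDisjoint (P i) (P j)) →
      ∃ i, s(u, v) ∈ (P i).edges :=
  stmt2_general G ρ x y u v hGe' hcrit
end

section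
/- Let G be a biconnected (2-vertex-connected) graph on at least 3 vertices and let S be a set of edges of G. Then G−S is biconnected if and only if for every edge (u,v) ∈ S there exist two internally vertex-disjoint u-v paths in G−S. -/
open SimpleGraph

/-!
Whitney's argument gives the two paths in a biconnected graph: induct along a walk
`v, w, …, u`. Given internally disjoint `u`–`w` paths `P₁, P₂`, a `u`–`v` walk avoiding `w`
leaves `P₁ ∪ P₂` for the last time at some `x`, say on `P₁`; then `P₁` up to `x` followed by
this tail, and `P₂` followed by the edge `wv`, are internally disjoint `u`–`v` paths.

Conversely, a set of fewer than two vertices containing neither `u` nor `v` misses one of two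
internally disjoint `u`–`v` paths, so each deleted edge of `G - T` is bypassed inside
`G - S - T`, and the connectivity of `G - T` passes to `G - S - T`.
-/

section

variable {V : Type*} {G H : SimpleGraph V}

namespace SimpleGraph

namespace Walk

theorem isPath_append_iff {u x v : V} {p : G.Walk u x} {q : G.Walk x v} :
    (p.append q).IsPath ↔
      p.IsPath ∧ q.IsPath ∧ ∀ y ∈ p.support, y ∈ q.support → y = x := by
  rw [isPath_def, isPath_def, isPath_def, support_append, List.nodup_append,
    ← cons_tail_support q, List.nodup_cons]
  constructor
  · rintro ⟨hp, hq, hdisj⟩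
    refine ⟨hp, ⟨?_, hq⟩, fun y hyp hyq => ?_⟩
    · exact fun hx => hdisj x p.end_mem_support x hx rfl
    · rcases List.mem_cons.mp hyq with rfl | hyq
      · rfl
      · exact absurd rfl (hdisj y hyp y hyq)
  · rintro ⟨hp, ⟨hx, hq⟩, hmeet⟩
    refine ⟨hp, hq, fun y hyp z hzq hyz => ?_⟩
    subst hyz
    exact hx (hmeet y hyp (List.mem_cons_of_mem x hzq) ▸ hzq)

theorem exists_isPath_meeting_only_at_start [DecidableEq V] (T : Set V) {a b : V}
    (R : G.Walk a b) (hR : ∃ y ∈ R.support, y ∈ T) :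
    ∃ x ∈ T, ∃ R' : G.Walk x b, R'.IsPath ∧ R'.support ⊆ R.support ∧
      ∀ y ∈ R'.support, y ∈ T → y = x := by
  induction R with
  | nil =>
    obtain ⟨y, hy, hyT⟩ := hR
    rw [support_nil, List.mem_singleton] at hy
    subst hy
    exact ⟨y, hyT, nil, IsPath.nil, fun _ h => h, fun z hz _ => by simpa using hz⟩
  | @cons a c b hac q ih =>
    by_cases hq : ∃ y ∈ q.support, y ∈ T
    · obtain ⟨x, hxT, R', hR', hsub, hmeet⟩ := ih hq
      exact ⟨x, hxT, R', hR', List.Subset.trans hsub (List.subset_cons_self _ _), hmeet⟩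
    · push Not at hq
      have haT : a ∈ T := by
        obtain ⟨y, hy, hyT⟩ := hR
        rcases List.mem_cons.mp (support_cons hac q ▸ hy) with rfl | hy
        · exact hyT
        · exact absurd hyT (hq y hy)
      refine ⟨a, haT, (cons hac q).bypass, bypass_isPath _,
        support_bypass_subset_support _, fun y hy hyT => ?_⟩
      rcases List.mem_cons.mp (support_bypass_subset_support _ hy) with rfl | hy
      · rfl
      · exact absurd hyT (hq y hy)

end Walk

theorem exists_walk_of_reachable_induce {s : Set V} {a b : s}
    (h : (G.induce s).Reachable a b) : ∃ W : G.Walk a b, ∀ x ∈ W.support, x ∈ s := by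
  obtain ⟨W⟩ := h
  refine ⟨W.map (Embedding.induce s).toHom, fun x hx => ?_⟩
  obtain ⟨y, -, rfl⟩ := List.mem_map.mp (Walk.support_map _ W ▸ hx)
  exact y.2

theorem Connected.of_adj_reachable (hG : G.Connected)
    (h : ∀ a b, G.Adj a b → H.Reachable a b) : H.Connected := by
  have := hG.nonempty
  refine ⟨fun a b => ?_⟩
  obtain ⟨r⟩ := hG.preconnected a b
  induction r with
  | nil => rfl
  | cons hadj _ ih => exact (h _ _ hadj).trans ih

end SimpleGraph

namespace IntDisjoint

theorem symm {u v : V} {p q : G.Walk u v} (h : IntDisjoint p q) : IntDisjoint q p :=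
  fun y hq hp => h y hp hq

theorem reachable_induce_compl {u v : V} {p q : G.Walk u v} (h : IntDisjoint p q)
    {T : Set V} (hT : T.Subsingleton) (hu : u ∉ T) (hv : v ∉ T) :
    (G.induce Tᶜ).Reachable ⟨u, hu⟩ ⟨v, hv⟩ := by
  by_cases hp : ∀ y ∈ p.support, y ∈ Tᶜ
  · exact ⟨p.induce Tᶜ hp⟩
  push Not at hp
  obtain ⟨t, htp, htT⟩ := hp
  refine ⟨q.induce Tᶜ fun y hyq hyT => ?_⟩
  obtain rfl := hT hyT (Set.notMem_compl_iff.mp htT)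
  rcases h y htp hyq with rfl | rfl
  exacts [hu hyT, hv hyT]

end IntDisjoint

namespace SimpleGraph

theorem exists_intDisjoint_paths_of_detour {u w v x : V}
    {P₁ P₂ : G.Walk u w} (hP₁ : P₁.IsPath) (hP₂ : P₂.IsPath) (hdisj : IntDisjoint P₁ P₂)
    (hwv : G.Adj w v) (huv : u ≠ v) (hx : x ∈ P₁.support) (hxw : x ≠ w)
    {R : G.Walk x v} (hR : R.IsPath)
    (hmeet : ∀ y ∈ R.support, y ∈ P₁.support ∨ y ∈ P₂.support → y = x) :
    ∃ p q : G.Walk u v, p.IsPath ∧ q.IsPath ∧ IntDisjoint p q := by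
  obtain ⟨t, r, ht, -, rfl⟩ := hP₁.mem_support_iff_exists_append.mp hx
  have htr := Walk.isPath_append_iff.mp hP₁
  have htP₁ : ∀ {y}, y ∈ t.support → y ∈ (t.append r).support :=
    fun hy => (Walk.mem_support_append_iff _ _).mpr (Or.inl hy)
  have hwt : w ∉ t.support := fun hw => hxw (htr.2.2 w hw r.end_mem_support).symm
  have hvP₂ : v ∉ P₂.support := by
    intro hv
    obtain rfl := hmeet v R.end_mem_support (Or.inr hv)
    rcases hdisj _ (htP₁ t.end_mem_support) hv with h | h
    exacts [huv h.symm, hxw h]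
  refine ⟨t.append R, P₂.append hwv.toWalk, ?_, ?_, ?_⟩
  · exact Walk.isPath_append_iff.mpr
      ⟨ht, hR, fun y hyt hyR => hmeet y hyR (Or.inl (htP₁ hyt))⟩
  · refine Walk.isPath_append_iff.mpr ⟨hP₂, hwv.isPath_toWalk, fun y hy hyw => ?_⟩
    rw [hwv.support_toWalk, List.mem_pair] at hyw
    exact hyw.resolve_right (by rintro rfl; exact hvP₂ hy)
  · intro y hy₁ hy₂
    rw [Walk.mem_support_append_iff] at hy₁ hy₂
    rw [hwv.support_toWalk, List.mem_pair] at hy₂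
    rcases hy₂ with hy₂ | rfl | rfl
    · obtain hyt | hyR := hy₁
      · exact (hdisj y (htP₁ hyt) hy₂).imp_right fun h => absurd (h ▸ hyt) hwt
      · obtain rfl := hmeet y hyR (Or.inr hy₂)
        exact (hdisj y hx hy₂).imp_right fun h => absurd h hxw
    · exfalso
      obtain hyt | hyR := hy₁
      · exact hwt hyt
      · exact hxw (hmeet y hyR (Or.inl (Walk.end_mem_support _))).symm
    · exact Or.inr rfl

theorem exists_intDisjoint_paths_of_walk (hcut : ∀ w, (G.induce {w}ᶜ).Preconnected)
    {a b : V} (r : G.Walk a b) : ∃ p q : G.Walk b a, p.IsPath ∧ q.IsPath ∧ IntDisjoint p q := by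
  classical
  induction r with
  | nil => exact ⟨.nil, .nil, .nil, .nil, fun y hy _ => .inl (by simpa using hy)⟩
  | @cons v w u hvw q ih =>
    obtain ⟨P₁, P₂, hP₁, hP₂, hdisj⟩ := ih
    by_cases huv : u = v
    · subst huv
      exact ⟨.nil, .nil, .nil, .nil, fun y hy _ => .inl (by simpa using hy)⟩
    by_cases huw : u = w
    · subst huw
      -- `IntDisjoint` lets the edge `uv` serve as both paths.
      refine ⟨hvw.symm.toWalk, hvw.symm.toWalk, hvw.symm.isPath_toWalk, hvw.symm.isPath_toWalk,
        fun y hy _ => ?_⟩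
      rwa [Adj.support_toWalk, List.mem_pair] at hy
    obtain ⟨R, hR⟩ := exists_walk_of_reachable_induce (hcut w ⟨u, huw⟩ ⟨v, hvw.ne⟩)
    obtain ⟨x, hx, R', hR', hsub, hmeet⟩ := R.exists_isPath_meeting_only_at_start
      {y | y ∈ P₁.support ∨ y ∈ P₂.support} ⟨u, R.start_mem_support, .inl P₁.start_mem_support⟩
    have hxw : x ≠ w := fun h => hR x (hsub R'.start_mem_support) h
    rcases hx with hx | hx
    · exact exists_intDisjoint_paths_of_detour hP₁ hP₂ hdisj hvw.symm huv hx hxw hR' hmeet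
    · exact exists_intDisjoint_paths_of_detour hP₂ hP₁ hdisj.symm hvw.symm huv hx hxw hR'
        fun y hy h => hmeet y hy h.symm

theorem exists_intDisjoint_paths (hconn : G.Preconnected)
    (hcut : ∀ w, (G.induce {w}ᶜ).Preconnected) (u v : V) :
    ∃ p q : G.Walk u v, p.IsPath ∧ q.IsPath ∧ IntDisjoint p q :=
  exists_intDisjoint_paths_of_walk hcut (hconn v u).some

end SimpleGraph

namespace KConnected

variable [Fintype V]

theorem exists_intDisjoint_paths (h : KConnected G 2) (u v : V) :
    ∃ p q : G.Walk u v, p.IsPath ∧ q.IsPath ∧ IntDisjoint p q := by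
  refine SimpleGraph.exists_intDisjoint_paths (fun a b => ?_) (fun w => ?_) u v
  · exact ((h.2 ∅ (by simp)).preconnected ⟨a, by simp⟩ ⟨b, by simp⟩).map
      (Embedding.induce _).toHom
  · have := (h.2 {w} (by simp)).preconnected
    rwa [Finset.coe_singleton] at this

theorem of_adj_reachable_induce {k : ℕ} (hG : KConnected G k)
    (h : ∀ T : Finset V, T.card < k → ∀ a b, (G.induce (↑T)ᶜ).Adj a b →
      (H.induce (↑T)ᶜ).Reachable a b) :
    KConnected H k :=
  ⟨hG.1, fun T hT => (hG.2 T hT).of_adj_reachable (h T hT)⟩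

end KConnected

end

theorem stmt4_general {V : Type*} [Fintype V] (G : SimpleGraph V)
    (hG : KConnected G 2)
    (S : Set (Sym2 V)) :
    KConnected (G.deleteEdges S) 2 ↔
      ∀ u v : V, G.Adj u v → s(u, v) ∈ S →
        ∃ p q : (G.deleteEdges S).Walk u v, p.IsPath ∧ q.IsPath ∧ IntDisjoint p q := by
  refine ⟨fun hH u v _ _ => hH.exists_intDisjoint_paths u v, fun h => ?_⟩
  refine hG.of_adj_reachable_induce fun T hT a b hab => ?_
  by_cases hab_S : s(a.1, b.1) ∈ S
  · obtain ⟨p, q, -, -, hpq⟩ := h a b hab hab_S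
    exact hpq.reachable_induce_compl (Finset.card_le_one_iff_subsingleton.mp (by omega)) a.2 b.2
  · exact Adj.reachable (induce_adj.mpr (deleteEdges_adj.mpr ⟨hab, hab_S⟩))

theorem stmt4 {V : Type*} [Fintype V] (G : SimpleGraph V)
    (hV : 3 ≤ Fintype.card V) (hG : KConnected G 2)
    (S : Set (Sym2 V)) (hS : S ⊆ G.edgeSet) :
    KConnected (G.deleteEdges S) 2 ↔
      ∀ u v : V, G.Adj u v → s(u, v) ∈ S →
        ∃ p q : (G.deleteEdges S).Walk u v, p.IsPath ∧ q.IsPath ∧ IntDisjoint p q :=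
  stmt4_general G hG S
end

section
/- Let G be a finite simple graph. Construct a graph H as follows: the vertex set of H is V(G) ∪ E(G) ∪ {x} (all original vertices, one new vertex s_e for each edge e of G, and a new apex vertex x); for every edge e = (u,v) of G, H contains the edges (u, s_e) and (v, s_e); and x is adjacent in H to every vertex of V(G). Then for every subset X ⊆ V(G) (note X contains only original vertices, so x ∉ X and no subdivision vertex is in X), the graph H − X is connected if and only if X is an independent set in G. -/
/-! In `H - X` every original vertex is adjacent to the apex, and a subdivision vertex `s_e`
reaches the apex through any endpoint of `e` outside `X`; such an endpoint exists for every edge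
exactly when `X` is independent. If instead both endpoints of an edge lie in `X`, then `s_e` is an
isolated vertex of `H - X` distinct from the apex. -/

open SimpleGraph

/-- The graph obtained from `G` by subdividing every edge once (the subdivision
vertex of edge `e` is `Sum.inr (Sum.inl e)`) and adding a new apex vertex
`Sum.inr (Sum.inr ())` adjacent to all original vertices. -/
def apexSubdiv {V : Type*} (G : SimpleGraph V) :
    SimpleGraph (V ⊕ (G.edgeSet ⊕ Unit)) :=
  SimpleGraph.fromRel (fun a b =>
    match a, b with
    | Sum.inl u, Sum.inr (Sum.inl e) => u ∈ (e : Sym2 V)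
    | Sum.inr (Sum.inr _), Sum.inl _ => True
    | _, _ => False)

lemma SimpleGraph.exists_mem_notMem_of_mem_edgeSet {V : Type*} {G : SimpleGraph V} {X : Set V}
    (hX : ∀ a ∈ X, ∀ b ∈ X, ¬ G.Adj a b) {e : Sym2 V} (he : e ∈ G.edgeSet) :
    ∃ u ∈ e, u ∉ X := by
  induction e using Sym2.ind with
  | _ a b =>
    by_cases ha : a ∈ X
    · exact ⟨b, Sym2.mem_mk_right a b, fun hb => hX a ha b hb he⟩
    · exact ⟨a, Sym2.mem_mk_left a b, ha⟩

section ApexSubdiv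

variable {V : Type*} (G : SimpleGraph V)

lemma apexSubdiv_adj_inl_subdiv {u : V} {e : G.edgeSet} (hu : u ∈ (e : Sym2 V)) :
    (apexSubdiv G).Adj (Sum.inl u) (Sum.inr (Sum.inl e)) := by
  simpa [apexSubdiv] using hu

lemma apexSubdiv_adj_inl_apex (u : V) :
    (apexSubdiv G).Adj (Sum.inl u) (Sum.inr (Sum.inr ())) := by
  simp [apexSubdiv]

lemma apexSubdiv_adj_subdiv_iff (e : G.edgeSet) (c : V ⊕ (G.edgeSet ⊕ Unit)) :
    (apexSubdiv G).Adj (Sum.inr (Sum.inl e)) c ↔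
      ∃ u : V, c = Sum.inl u ∧ u ∈ (e : Sym2 V) := by
  rcases c with u | e' | _ <;> simp [apexSubdiv]

/-- The vertex set of `H - X`. -/
def apexSubdivMinusVerts (X : Set V) : Set (V ⊕ (G.edgeSet ⊕ Unit)) :=
  {w | ∀ v : V, w = Sum.inl v → v ∉ X}

variable {G} {X : Set V}

@[simp]
lemma inl_mem_apexSubdivMinusVerts {u : V} :
    Sum.inl u ∈ apexSubdivMinusVerts G X ↔ u ∉ X := by
  simp [apexSubdivMinusVerts]

@[simp]
lemma inr_mem_apexSubdivMinusVerts (z : G.edgeSet ⊕ Unit) :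
    Sum.inr z ∈ apexSubdivMinusVerts G X := by
  simp [apexSubdivMinusVerts]

variable (G X)

abbrev apexSubdivMinus : SimpleGraph (apexSubdivMinusVerts G X) :=
  (apexSubdiv G).induce (apexSubdivMinusVerts G X)

def apexSubdivMinus.apex : apexSubdivMinusVerts G X :=
  ⟨Sum.inr (Sum.inr ()), inr_mem_apexSubdivMinusVerts _⟩

variable {G X}

lemma apexSubdivMinus_reachable_apex (hX : ∀ a ∈ X, ∀ b ∈ X, ¬ G.Adj a b)
    (w : apexSubdivMinusVerts G X) :
    (apexSubdivMinus G X).Reachable w (apexSubdivMinus.apex G X) := by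
  obtain ⟨u | e | ⟨⟩, hw⟩ := w
  · exact Adj.reachable (apexSubdiv_adj_inl_apex G u)
  · obtain ⟨u, hue, huX⟩ := exists_mem_notMem_of_mem_edgeSet hX e.prop
    have hsu : (apexSubdivMinus G X).Adj ⟨_, hw⟩
        ⟨Sum.inl u, inl_mem_apexSubdivMinusVerts.2 huX⟩ :=
      (apexSubdiv_adj_inl_subdiv G hue).symm
    exact hsu.reachable.trans (Adj.reachable (apexSubdiv_adj_inl_apex G u))
  · rfl

lemma apexSubdivMinus_not_connected {a b : V} (ha : a ∈ X) (hb : b ∈ X) (hab : G.Adj a b) :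
    ¬ (apexSubdivMinus G X).Connected := by
  intro hconn
  let se : apexSubdivMinusVerts G X :=
    ⟨Sum.inr (Sum.inl ⟨s(a, b), hab⟩), inr_mem_apexSubdivMinusVerts _⟩
  have : Nontrivial (apexSubdivMinusVerts G X) :=
    nontrivial_of_ne se (apexSubdivMinus.apex G X) (by simp [se, apexSubdivMinus.apex])
  obtain ⟨⟨c, hc⟩, hadj⟩ := hconn.preconnected.exists_adj_of_nontrivial se
  obtain ⟨u, rfl, hu⟩ := (apexSubdiv_adj_subdiv_iff G _ c).1 hadj
  rcases Sym2.mem_iff.1 hu with rfl | rfl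
  · exact inl_mem_apexSubdivMinusVerts.1 hc ha
  · exact inl_mem_apexSubdivMinusVerts.1 hc hb

end ApexSubdiv

theorem stmt9 {V : Type*} (G : SimpleGraph V) (X : Set V) :
    ((apexSubdiv G).induce
        {w : V ⊕ (G.edgeSet ⊕ Unit) | ∀ v : V, w = Sum.inl v → v ∉ X}).Connected ↔
      ∀ a ∈ X, ∀ b ∈ X, ¬ G.Adj a b := by
  change (apexSubdivMinus G X).Connected ↔ _
  refine ⟨fun hconn a ha b hb hab => apexSubdivMinus_not_connected ha hb hab hconn,
    fun hX => ?_⟩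
  exact (connected_iff_exists_forall_reachable _).2
    ⟨_, fun w => (apexSubdivMinus_reachable_apex hX w).symm⟩
end

section
/- Let D be a digraph and let (x,y) be an arc of D with x ≠ y. Define the path-contraction D ∥ (x,y) as the digraph obtained by deleting x and y, adding a new vertex z, and adding an arc (w, z) for every arc (w, x) of D with w ∉ {x,y}, and an arc (z, w) for every arc (y, w) of D with w ∉ {x,y}. Let Q be the set of arcs of D of the form (x, u) with u ≠ y, or (u, y) with u ≠ x, or (y, x). If D − Q (the digraph D with the arcs of Q deleted but all vertices retained) is strongly connected, then D ∥ (x,y) is strongly connected. -/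
/-!
Send `x` and `y` to the new vertex `z` and every other vertex to itself. An arc of `D − Q`
either joins two vertices other than `x, y`, or enters `x`, or leaves `y`, or is the arc `(x, y)`
itself; its image is therefore an arc of `D ∥ (x,y)` or the trivial walk at `z`. Directed walks
of `D − Q` thus map to directed walks of `D ∥ (x,y)`, and the map is onto.
-/


/-- A digraph (given as an arc relation) is strongly connected if every vertex
can reach every other vertex by a directed path. -/
def StrongConn {V : Type*} (A : V → V → Prop) : Prop :=
  ∀ u v : V, Relation.ReflTransGen A u v

/-- The path-contraction `D ∥ (x,y)`: delete `x` and `y`, add a new vertex `z`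
(here `none`), keeping the in-arcs of `x` and the out-arcs of `y` for `z`. -/
def pathContract {V : Type*} (D : V → V → Prop) (x y : V) :
    Option {z : V // z ≠ x ∧ z ≠ y} → Option {z : V // z ≠ x ∧ z ≠ y} → Prop :=
  fun a b =>
    match a, b with
    | some a, some b => D a.1 b.1
    | some a, none => D a.1 x
    | none, some b => D y b.1
    | none, none => False

open Relation

theorem StrongConn.of_surjective {α β : Type*} {A : α → α → Prop} {B : β → β → Prop}
    (f : α → β) (hf : Function.Surjective f) (hmap : ∀ a b, A a b → ReflTransGen B (f a) (f b))
    (hA : StrongConn A) : StrongConn B := by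
  intro u v
  obtain ⟨a, rfl⟩ := hf u
  obtain ⟨b, rfl⟩ := hf v
  exact ReflTransGen.lift' f hmap a b (hA a b)

section PathContract

variable {V : Type*} (x y : V)

open Classical in
noncomputable def contractVertex (w : V) : Option {z : V // z ≠ x ∧ z ≠ y} :=
  if h : w ≠ x ∧ w ≠ y then some ⟨w, h⟩ else none

theorem contractVertex_surjective : Function.Surjective (contractVertex x y) := by
  rintro (_ | ⟨w, hw⟩)
  · exact ⟨x, by simp [contractVertex]⟩
  · exact ⟨w, by simp [contractVertex, hw]⟩

theorem contractVertex_reflGen {D : V → V → Prop} {a b : V} (hab : D a b)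
    (hx : ¬(a = x ∧ b ≠ y)) (hy : ¬(b = y ∧ a ≠ x)) (hyx : ¬(a = y ∧ b = x)) :
    ReflGen (pathContract D x y) (contractVertex x y a) (contractVertex x y b) := by
  unfold contractVertex
  split_ifs with ha hb hb
  · exact ReflGen.single hab
  · have hbx : b = x := by tauto
    subst hbx
    exact ReflGen.single hab
  · have hay : a = y := by tauto
    subst hay
    exact ReflGen.single hab
  · exact ReflGen.refl

end PathContract

theorem stmt11_general {V : Type*} (D : V → V → Prop) (x y : V)
    -- Q consists of the arcs (x,u) with u ≠ y, (u,y) with u ≠ x, and (y,x);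
    -- D − Q is strongly connected:
    (hQ : StrongConn (fun a b => D a b ∧ ¬(a = x ∧ b ≠ y) ∧ ¬(b = y ∧ a ≠ x) ∧
      ¬(a = y ∧ b = x))) :
    StrongConn (pathContract D x y) :=
  hQ.of_surjective (contractVertex x y) (contractVertex_surjective x y)
    fun _ _ ⟨hab, hx, hy, hyx⟩ => (contractVertex_reflGen x y hab hx hy hyx).to_reflTransGen

theorem stmt11 {V : Type*} (D : V → V → Prop) (x y : V) (hxy : x ≠ y)
    (harc : D x y)
    -- Q consists of the arcs (x,u) with u ≠ y, (u,y) with u ≠ x, and (y,x);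
    -- D − Q is strongly connected:
    (hQ : StrongConn (fun a b => D a b ∧ ¬(a = x ∧ b ≠ y) ∧ ¬(b = y ∧ a ≠ x) ∧
      ¬(a = y ∧ b = x))) :
    StrongConn (pathContract D x y) :=
  stmt11_general D x y hQ
end

section
/- Let G be a biconnected graph, let e = (x,y) be an edge such that G−e is biconnected, and suppose x and y are joined in G−e by an x-y flow {P₁, P₂} of value 2 (two internally vertex-disjoint x-y paths). Suppose e₁ is an edge of P₁ and w is an internal vertex of P₂ such that {e₁, w} is a mixed x-y cut in G−e. Let P be any path in G−e whose two endpoints u, v both lie on P₂, with u occurring no later than v in the traversal of P₂ from x to y, and which is internally vertex-disjoint from both P₁ and P₂. Then w does not lie strictly between u and v on P₂ unless w ∈ {u, v}; that is, the subpath of P₂ from u to v contains w only possibly as an endpoint. -/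
open SimpleGraph

/-!
If `w` were an interior vertex of the segment of `P₂` from `u` to `v`, replacing that segment by
`P` would give an `x`-`y` walk in `G - e` avoiding `w`. That walk also avoids `e₁`: each of its
vertices lying on `P₁` lies on `P₂` as well, and the only possible edge of `P₁` with both ends on
`P₂` is `xy`, which is not an edge of `G - e`. This contradicts `{e₁, w}` being a cut.
-/

namespace List

variable {α : Type*} [DecidableEq α] {l : List α} {a : α} {k : ℕ}

theorem idxOf_le_of_mem_take (h : a ∈ l.take (k + 1)) : l.idxOf a ≤ k := by
  have := List.idxOf_lt_length_of_mem h
  rw [← List.take_append_drop (k + 1) l, List.idxOf_append_of_mem h]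
  grind

theorem Nodup.le_idxOf_of_mem_drop (hl : l.Nodup) (h : a ∈ l.drop k) : k ≤ l.idxOf a := by
  by_contra! hlt
  have ha : a ∈ l.take k := List.mem_take_iff_getElem.2 ⟨l.idxOf a, by grind⟩
  exact List.disjoint_take_drop hl le_rfl ha h

end List

namespace SimpleGraph.Walk

variable {V : Type*} {G : SimpleGraph V} {a b u w : V}

theorem support_drop {p : G.Walk a b} {n : ℕ} (hn : n ≤ p.length) :
    (p.drop n).support = p.support.drop n := by
  induction p generalizing n <;> cases n <;> simp_all [drop]

variable [DecidableEq V]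

theorem idxOf_le_of_mem_support_takeUntil (p : G.Walk a b) (hu : u ∈ p.support)
    (hw : w ∈ (p.takeUntil u hu).support) : p.support.idxOf w ≤ p.support.idxOf u := by
  rw [takeUntil_eq_take, support_copy, support_take] at hw
  exact List.idxOf_le_of_mem_take hw

theorem IsPath.idxOf_le_of_mem_support_dropUntil {p : G.Walk a b} (hp : p.IsPath)
    (hu : u ∈ p.support) (hw : w ∈ (p.dropUntil u hu).support) :
    p.support.idxOf u ≤ p.support.idxOf w := by
  have hlen : p.support.idxOf u ≤ p.length := by
    simpa [Nat.lt_succ_iff] using List.idxOf_lt_length_of_mem hu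
  rw [dropUntil_eq_drop, support_copy, support_drop hlen] at hw
  exact hp.support_nodup.le_idxOf_of_mem_drop hw

def replaceSegment (p : G.Walk a b) {u v : V} (hu : u ∈ p.support) (hv : v ∈ p.support)
    (q : G.Walk u v) : G.Walk a b :=
  (p.takeUntil u hu).append (q.append (p.dropUntil v hv))

theorem mem_support_replaceSegment {p : G.Walk a b} {u v : V} {hu : u ∈ p.support}
    {hv : v ∈ p.support} {q : G.Walk u v} {z : V} :
    z ∈ (p.replaceSegment hu hv q).support ↔
      z ∈ (p.takeUntil u hu).support ∨ z ∈ q.support ∨ z ∈ (p.dropUntil v hv).support := by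
  simp only [replaceSegment, mem_support_append_iff]

theorem mem_support_or_mem_support_of_mem_support_replaceSegment {p : G.Walk a b} {u v : V}
    {hu : u ∈ p.support} {hv : v ∈ p.support} {q : G.Walk u v} {z : V}
    (hz : z ∈ (p.replaceSegment hu hv q).support) : z ∈ p.support ∨ z ∈ q.support := by
  rcases mem_support_replaceSegment.1 hz with hz | hz | hz
  · exact .inl (p.support_takeUntil_subset_support hu hz)
  · exact .inr hz
  · exact .inl (p.support_dropUntil_subset_support hv hz)

end SimpleGraph.Walk

section ReplaceSegment

variable {V : Type*} {G : SimpleGraph V} {x y u v : V} {p₁ p₂ : G.Walk x y}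

theorem IntDisjoint.eq_of_mem_edges (h : IntDisjoint p₁ p₂) {e : Sym2 V} (he : e ∈ p₁.edges)
    (hq : ∀ z ∈ e, z ∈ p₂.support) : e = s(x, y) := by
  induction e using Sym2.ind with
  | _ a b =>
  have hab : a ≠ b := (p₁.adj_of_mem_edges he).ne
  rcases h a (p₁.fst_mem_support_of_mem_edges he) (hq a (Sym2.mem_mk_left a b)) with rfl | rfl <;>
  rcases h b (p₁.snd_mem_support_of_mem_edges he) (hq b (Sym2.mem_mk_right a b)) with rfl | rfl <;>
  first | exact absurd rfl hab | rfl | exact Sym2.eq_swap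

variable [DecidableEq V] {hu : u ∈ p₂.support} {hv : v ∈ p₂.support} {q : G.Walk u v}

theorem IntDisjoint.notMem_edges_replaceSegment (h : IntDisjoint p₁ p₂)
    (hq : ∀ z ∈ q.support, z ≠ u → z ≠ v → z ∉ p₁.support) {e : Sym2 V} (he : e ∈ p₁.edges)
    (hexy : e ≠ s(x, y)) : e ∉ (p₂.replaceSegment hu hv q).edges := fun he' => by
  refine hexy (h.eq_of_mem_edges he fun z hz => ?_)
  rcases Walk.mem_support_or_mem_support_of_mem_support_replaceSegment
    (Walk.mem_support_of_mem_edges he' hz) with hz₂ | hzq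
  · exact hz₂
  by_cases hzu : z = u
  · exact hzu ▸ hu
  by_cases hzv : z = v
  · exact hzv ▸ hv
  exact absurd (Walk.mem_support_of_mem_edges he hz) (hq z hzq hzu hzv)

theorem SimpleGraph.Walk.IsPath.notMem_support_replaceSegment (hp : p₂.IsPath)
    (hq : ∀ z ∈ q.support, z ≠ u → z ≠ v → z ∉ p₂.support) {w : V} (hw : w ∈ p₂.support)
    (hwu : w ≠ u) (hwv : w ≠ v) (hiu : p₂.support.idxOf u ≤ p₂.support.idxOf w)
    (hiv : p₂.support.idxOf w ≤ p₂.support.idxOf v) :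
    w ∉ (p₂.replaceSegment hu hv q).support := fun hw' => by
  rcases Walk.mem_support_replaceSegment.1 hw' with h | h | h
  · exact hwu <| (List.idxOf_inj hw).1 <|
      (p₂.idxOf_le_of_mem_support_takeUntil hu h).antisymm hiu
  · exact hq w h hwu hwv hw
  · exact hwv <| (List.idxOf_inj hw).1 <|
      hiv.antisymm (hp.idxOf_le_of_mem_support_dropUntil hv h)

end ReplaceSegment

theorem stmt13_general {V : Type*} [DecidableEq V] (G : SimpleGraph V)
    (x y : V)
    -- {P₁, P₂} is an x-y flow of value 2 in G - e
    (P₁ P₂ : (G.deleteEdges {s(x, y)}).Walk x y)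
    (hP₂ : P₂.IsPath) (hdisj : IntDisjoint P₁ P₂)
    -- e₁ is an edge of P₁ and w an internal vertex of P₂ with {e₁, w} a
    -- mixed x-y cut in G - e
    (e₁ : Sym2 V) (he₁ : e₁ ∈ P₁.edges)
    (w : V) (hw : w ∈ P₂.support)
    (hcut : ∀ p : (G.deleteEdges {s(x, y)}).Walk x y, e₁ ∈ p.edges ∨ w ∈ p.support)
    -- P is a path in G - e with both endpoints u, v on P₂ (u no later than v),
    -- internally vertex-disjoint from P₁ and P₂
    (u v : V) (hu : u ∈ P₂.support) (hv : v ∈ P₂.support)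
    (P : (G.deleteEdges {s(x, y)}).Walk u v)
    (hint : ∀ z ∈ P.support, z ≠ u → z ≠ v → z ∉ P₁.support ∧ z ∉ P₂.support)
    -- if w lies on the subpath of P₂ from u to v …
    (h1 : P₂.support.idxOf u ≤ P₂.support.idxOf w)
    (h2 : P₂.support.idxOf w ≤ P₂.support.idxOf v) :
    -- … then it is one of its endpoints
    w = u ∨ w = v := by
  by_contra! ⟨hwu, hwv⟩
  have he₁xy : e₁ ≠ s(x, y) := (edgeSet_deleteEdges _ ▸ P₁.edges_subset_edgeSet he₁).2
  rcases hcut (P₂.replaceSegment hu hv P) with he₁' | hw'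
  · exact hdisj.notMem_edges_replaceSegment (fun z hz hzu hzv => (hint z hz hzu hzv).1) he₁ he₁xy
      he₁'
  · exact hP₂.notMem_support_replaceSegment (fun z hz hzu hzv => (hint z hz hzu hzv).2) hw hwu hwv
      h1 h2 hw'

theorem stmt13 {V : Type*} [Fintype V] [DecidableEq V] (G : SimpleGraph V)
    (x y : V) (hadj : G.Adj x y)
    (hG : KConnected G 2) (hGe : KConnected (G.deleteEdges {s(x, y)}) 2)
    -- {P₁, P₂} is an x-y flow of value 2 in G - e
    (P₁ P₂ : (G.deleteEdges {s(x, y)}).Walk x y)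
    (hP₁ : P₁.IsPath) (hP₂ : P₂.IsPath) (hdisj : IntDisjoint P₁ P₂)
    -- e₁ is an edge of P₁ and w an internal vertex of P₂ with {e₁, w} a
    -- mixed x-y cut in G - e
    (e₁ : Sym2 V) (he₁ : e₁ ∈ P₁.edges)
    (w : V) (hw : w ∈ P₂.support) (hwx : w ≠ x) (hwy : w ≠ y)
    (hcut : ∀ p : (G.deleteEdges {s(x, y)}).Walk x y, e₁ ∈ p.edges ∨ w ∈ p.support)
    -- P is a path in G - e with both endpoints u, v on P₂ (u no later than v),
    -- internally vertex-disjoint from P₁ and P₂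
    (u v : V) (hu : u ∈ P₂.support) (hv : v ∈ P₂.support)
    (huv : P₂.support.idxOf u ≤ P₂.support.idxOf v)
    (P : (G.deleteEdges {s(x, y)}).Walk u v) (hP : P.IsPath)
    (hint : ∀ z ∈ P.support, z ≠ u → z ≠ v → z ∉ P₁.support ∧ z ∉ P₂.support)
    -- if w lies on the subpath of P₂ from u to v …
    (h1 : P₂.support.idxOf u ≤ P₂.support.idxOf w)
    (h2 : P₂.support.idxOf w ≤ P₂.support.idxOf v) :
    -- … then it is one of its endpoints
    w = u ∨ w = v :=
  stmt13_general G x y P₁ P₂ hP₂ hdisj e₁ he₁ w hw hcut u v hu hv P hint h1 h2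
end

section
/- Let G be a graph, x and y distinct non-adjacent vertices of G with κ_G(x,y) = 2, and let {e₁, w} be a mixed x-y cut in G, where e₁ is an edge and w a vertex not incident to e₁. Let A be the vertex set of the connected component of x in G − w − e₁ and B that of y. Then e₁ has one endpoint in A and one endpoint in B, and moreover every edge of G with one endpoint in A and the other in B equals e₁ (all other A-B connections pass through w). -/
/-
In `H = G − w − e₁`, the edge `e₁ = ab` is the only thing separating the components of `x` and
`y` inside `G − w`: adding the edge `ab` back to `H` can merge at most the two components of `a`
and `b`. Since `κ(x,y) = 2`, one of two internally disjoint `x`-`y` paths avoids `w`, so `x` and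
`y` are connected in `G − w` but not in `H`; hence one of `a, b` lies in `A` and the other in `B`.
Any other edge `cd` between `A` and `B` would survive in `H` and connect `x` to `y` there.
-/

open SimpleGraph

namespace SimpleGraph

variable {V : Type*} {G H : SimpleGraph V} {a b u v w : V}

theorem le_deleteEdges_sup_edge (G : SimpleGraph V) (a b : V) :
    G ≤ G.deleteEdges {s(a, b)} ⊔ edge a b := by
  intro u v huv
  by_cases he : s(u, v) = s(a, b)
  · exact Or.inr ((adj_edge ..).2 ⟨he.symm, huv.ne⟩)
  · exact Or.inl (deleteEdges_adj.2 ⟨huv, he⟩)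

theorem Reachable.of_sup_edge (h : (H ⊔ edge a b).Reachable u v) :
    H.Reachable u v ∨ (H.Reachable u a ∧ H.Reachable b v) ∨
      (H.Reachable u b ∧ H.Reachable a v) := by
  obtain ⟨p⟩ := h
  induction p with
  | nil => exact Or.inl .rfl
  | @cons u u' v hadj p ih =>
    rcases hadj with hadj | hadj
    · have huu' := hadj.reachable
      exact ih.imp (huu'.trans ·) (Or.imp (And.imp_left huu'.trans) (And.imp_left huu'.trans))
    · obtain ⟨⟨rfl, rfl⟩ | ⟨rfl, rfl⟩, -⟩ := (edge_adj ..).1 hadj <;>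
        grind [Reachable.refl, Reachable.trans, Reachable.symm]

namespace Walk

theorem notMem_incidenceSet_of_mem_edges (p : G.Walk u v) (hw : w ∉ p.support) {e : Sym2 V}
    (he : e ∈ p.edges) : e ∉ G.incidenceSet w := by
  induction e using Sym2.ind with
  | h t t' =>
    rintro ⟨-, hwe⟩
    rcases Sym2.mem_iff.1 hwe with rfl | rfl
    · exact hw (p.fst_mem_support_of_mem_edges he)
    · exact hw (p.snd_mem_support_of_mem_edges he)

theorem reachable_deleteIncidenceSet (p : G.Walk u v) (hw : w ∉ p.support) :
    (G.deleteIncidenceSet w).Reachable u v :=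
  ⟨p.toDeleteEdges _ fun _ => p.notMem_incidenceSet_of_mem_edges hw⟩

theorem notMem_support_of_deleteIncidenceSet (p : (G.deleteIncidenceSet w).Walk u v)
    (hu : u ≠ w) : w ∉ p.support := by
  induction p with
  | nil => simpa using hu.symm
  | cons hadj p ih =>
    rw [support_cons, List.mem_cons, not_or]
    exact ⟨hu.symm, ih (deleteIncidenceSet_adj.1 hadj).2.2⟩

end Walk

theorem reachable_deleteEdges_deleteIncidenceSet_iff (hu : u ≠ w) :
    ((G.deleteIncidenceSet w).deleteEdges {s(a, b)}).Reachable u v ↔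
      ∃ p : G.Walk u v, w ∉ p.support ∧ s(a, b) ∉ p.edges := by
  rw [reachable_deleteEdges_iff_exists_walk]
  constructor
  · rintro ⟨p, hp⟩
    refine ⟨p.mapLe (deleteIncidenceSet_le G w), ?_, ?_⟩
    · rw [Walk.support_mapLe_eq_support]
      exact p.notMem_support_of_deleteIncidenceSet hu
    · rwa [Walk.edges_mapLe_eq_edges]
  · rintro ⟨p, hw, he⟩
    exact ⟨p.toDeleteEdges _ fun _ => p.notMem_incidenceSet_of_mem_edges hw,
      Walk.edges_transfer p _ ▸ he⟩

end SimpleGraph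

theorem IntDisjoint.notMem_support_or {V : Type*} {G : SimpleGraph V} {x y w : V}
    {p q : G.Walk x y} (h : IntDisjoint p q) (hwx : w ≠ x) (hwy : w ≠ y) :
    w ∉ p.support ∨ w ∉ q.support := by
  by_contra! hw
  exact (h w hw.1 hw.2).elim hwx hwy

theorem stmt15_general {V : Type*} (G : SimpleGraph V) (x y : V)
    -- κ_G(x,y) = 2 : there are two internally disjoint x-y paths ...
    (hflow2 : ∃ p q : G.Walk x y, p.IsPath ∧ q.IsPath ∧ IntDisjoint p q)
    -- {e₁, w} is a mixed x-y cut, e₁ = (a,b) an edge, w a vertex not incident to e₁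
    (a b : V) (w : V)
    (hwx : w ≠ x) (hwy : w ≠ y)
    (hcut : ∀ p : G.Walk x y, s(a, b) ∈ p.edges ∨ w ∈ p.support)
    -- A and B are the vertex sets of the components of x and y in G − w − e₁
    (A B : Set V)
    (hA : A = {z : V | ∃ p : G.Walk x z, w ∉ p.support ∧ s(a, b) ∉ p.edges})
    (hB : B = {z : V | ∃ p : G.Walk y z, w ∉ p.support ∧ s(a, b) ∉ p.edges}) :
    ((a ∈ A ∧ b ∈ B) ∨ (a ∈ B ∧ b ∈ A)) ∧
      ∀ c d : V, G.Adj c d → c ∈ A → d ∈ B → s(c, d) = s(a, b) := by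
  set H := (G.deleteIncidenceSet w).deleteEdges {s(a, b)}
  have hA' : ∀ z, z ∈ A ↔ H.Reachable x z := fun z => by
    rw [hA, reachable_deleteEdges_deleteIncidenceSet_iff hwx.symm, Set.mem_ofPred_eq]
  have hB' : ∀ z, z ∈ B ↔ H.Reachable z y := fun z => by
    rw [hB, reachable_comm, reachable_deleteEdges_deleteIncidenceSet_iff hwy.symm,
      Set.mem_ofPred_eq]
  have hxy : ¬ H.Reachable x y := fun h => by
    obtain ⟨p, hw, he⟩ := (reachable_deleteEdges_deleteIncidenceSet_iff hwx.symm).1 h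
    exact (hcut p).elim he hw
  obtain ⟨p, q, -, -, hpq⟩ := hflow2
  have hxy' : (G.deleteIncidenceSet w).Reachable x y := by
    rcases hpq.notMem_support_or hwx hwy with hw | hw
    exacts [p.reachable_deleteIncidenceSet hw, q.reachable_deleteIncidenceSet hw]
  refine ⟨?_, fun c d hcd hc hd => ?_⟩
  · rw [hA', hA', hB', hB']
    exact (((hxy'.mono (le_deleteEdges_sup_edge _ a b)).of_sup_edge).resolve_left hxy).imp id
      And.symm
  · by_contra hne
    have hcw : c ≠ w := by
      obtain ⟨p, hw, -⟩ := hA ▸ hc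
      exact fun h => hw (h ▸ p.end_mem_support)
    have hdw : d ≠ w := by
      obtain ⟨p, hw, -⟩ := hB ▸ hd
      exact fun h => hw (h ▸ p.end_mem_support)
    have hH : H.Adj c d := deleteEdges_adj.2 ⟨deleteIncidenceSet_adj.2 ⟨hcd, hcw, hdw⟩, hne⟩
    exact hxy (((hA' c).1 hc).trans (hH.reachable.trans ((hB' d).1 hd)))

theorem stmt15 {V : Type*} (G : SimpleGraph V) (x y : V) (hxy : x ≠ y)
    (hnadj : ¬ G.Adj x y)
    -- κ_G(x,y) = 2 : there are two internally disjoint x-y paths ...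
    (hflow2 : ∃ p q : G.Walk x y, p.IsPath ∧ q.IsPath ∧ IntDisjoint p q)
    -- ... but no three pairwise internally disjoint x-y paths
    (hno3 : ¬ ∃ Q : Fin 3 → G.Walk x y, (∀ i, (Q i).IsPath) ∧
      ∀ i j, i ≠ j → IntDisjoint (Q i) (Q j))
    -- {e₁, w} is a mixed x-y cut, e₁ = (a,b) an edge, w a vertex not incident to e₁
    (a b : V) (hab : G.Adj a b) (w : V) (hwa : w ≠ a) (hwb : w ≠ b)
    (hwx : w ≠ x) (hwy : w ≠ y)
    (hcut : ∀ p : G.Walk x y, s(a, b) ∈ p.edges ∨ w ∈ p.support)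
    -- A and B are the vertex sets of the components of x and y in G − w − e₁
    (A B : Set V)
    (hA : A = {z : V | ∃ p : G.Walk x z, w ∉ p.support ∧ s(a, b) ∉ p.edges})
    (hB : B = {z : V | ∃ p : G.Walk y z, w ∉ p.support ∧ s(a, b) ∉ p.edges}) :
    ((a ∈ A ∧ b ∈ B) ∨ (a ∈ B ∧ b ∈ A)) ∧
      ∀ c d : V, G.Adj c d → c ∈ A → d ∈ B → s(c, d) = s(a, b) :=
  stmt15_general G x y hflow2 a b w hwx hwy hcut A B hA hB
end
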